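/- For a ¬-free nested program P over atoms A with the two-copy classical translation pl(P), a classical interpretation I of the extended language (with primed atoms) satisfies pl(P) if and only if (I_new, I_old) is an SE-model of P, where I_old = { A ∈ A : I ⊨ A } and I_new = { A ∈ A : I ⊨ A' }. Moreover every positive SE-model of P arises this way. -/

import Mathlib

/-!
Read `I` as the pair `(Y, X)` of its original and primed atoms. By induction on formulas,
`pl(F)` holds in `I` iff `Y ⊨ F`, and `pl(F)'` holds in `I` iff `X ⊨ F^Y`: an occurrence under
`¬` keeps its original atoms, so it is evaluated in `Y`, exactly as the reduct does. Hence the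
first two parts of `pl(P)` say `Y ⊨ P` and `X ⊨ P^Y`, and the axioms `A' ⊃ A` say `X ⊆ Y`.
Conversely, a pair of sets of atoms is read back as the interpretation with these two copies.
-/


open scoped Classical

inductive Lit where
  | pos : ℕ → Lit
  | neg : ℕ → Lit
deriving DecidableEq

inductive Fml where
  | bot : Fml
  | top : Fml
  | lit : Lit → Fml
  | not : Fml → Fml
  | conj : Fml → Fml → Fml
  | disj : Fml → Fml → Fml
deriving DecidableEq

structure Rule where
  head : Fml
  body : Fml
deriving DecidableEq

abbrev Prog := Set Rule

/-- A set of literals is consistent if it contains no complementary pair. -/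
def Consistent (X : Set Lit) : Prop :=
  ∀ a : ℕ, ¬ (Lit.pos a ∈ X ∧ Lit.neg a ∈ X)

def Sat (X : Set Lit) : Fml → Prop
  | Fml.bot => False
  | Fml.top => True
  | Fml.lit l => l ∈ X
  | Fml.not F => ¬ Sat X F
  | Fml.conj F G => Sat X F ∧ Sat X G
  | Fml.disj F G => Sat X F ∨ Sat X G

def SatRule (X : Set Lit) (r : Rule) : Prop := Sat X r.body → Sat X r.head

def SatProg (X : Set Lit) (P : Prog) : Prop := ∀ r ∈ P, SatRule X r

/-- The reduct of a formula relative to X. -/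
noncomputable def Reduct (X : Set Lit) : Fml → Fml
  | Fml.bot => Fml.bot
  | Fml.top => Fml.top
  | Fml.lit l => Fml.lit l
  | Fml.not F => if Sat X F then Fml.bot else Fml.top
  | Fml.conj F G => Fml.conj (Reduct X F) (Reduct X G)
  | Fml.disj F G => Fml.disj (Reduct X F) (Reduct X G)

noncomputable def ReductRule (X : Set Lit) (r : Rule) : Rule :=
  ⟨Reduct X r.head, Reduct X r.body⟩

noncomputable def ReductProg (X : Set Lit) (P : Prog) : Prog :=
  ReductRule X '' P

/-- Y is an answer set for P: Y is minimal among consistent sets satisfying the reduct of P w.r.t. Y. -/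
def AnswerSet (Y : Set Lit) (P : Prog) : Prop :=
  Consistent Y ∧ SatProg Y (ReductProg Y P) ∧
    ∀ Z : Set Lit, Consistent Z → SatProg Z (ReductProg Y P) → Z ⊆ Y → Z = Y

def SEModel (P : Prog) (X Y : Set Lit) : Prop :=
  Consistent X ∧ Consistent Y ∧ X ⊆ Y ∧ SatProg Y P ∧ SatProg X (ReductProg Y P)

def StrongEq (P Q : Prog) : Prop :=
  ∀ R : Prog, ∀ Y : Set Lit, AnswerSet Y (P ∪ R) ↔ AnswerSet Y (Q ∪ R)

def Fml.negFree : Fml → Prop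
  | Fml.bot => True
  | Fml.top => True
  | Fml.lit l => ∃ a, l = Lit.pos a
  | Fml.not F => F.negFree
  | Fml.conj F G => F.negFree ∧ G.negFree
  | Fml.disj F G => F.negFree ∧ G.negFree

def ProgNegFree (P : Prog) : Prop := ∀ r ∈ P, r.head.negFree ∧ r.body.negFree

/-- The set of atoms (positive literals) in a set of literals. -/
def PosLits (Z : Set Lit) : Set Lit := {l ∈ Z | ∃ a, l = Lit.pos a}

def AtomsOnly (Z : Set Lit) : Prop := ∀ l ∈ Z, ∃ a, l = Lit.pos a

/-- Classical propositional formulas over an original (`false`) and a primed (`true`)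
copy of the atoms. -/
inductive CF where
  | bot : CF
  | top : CF
  | atom : Bool → ℕ → CF
  | not : CF → CF
  | and : CF → CF → CF
  | or : CF → CF → CF
  | imp : CF → CF → CF

/-- Classical satisfaction: an interpretation is the set of true (copy, atom) pairs. -/
def CSat (I : Set (Bool × ℕ)) : CF → Prop
  | CF.bot => False
  | CF.top => True
  | CF.atom b a => (b, a) ∈ I
  | CF.not φ => ¬ CSat I φ
  | CF.and φ ψ => CSat I φ ∧ CSat I ψ
  | CF.or φ ψ => CSat I φ ∨ CSat I ψ
  | CF.imp φ ψ => CSat I φ → CSat I ψ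

/-- pl: replace not by ¬, ; by ∨, , by ∧ (on ¬-free formulas all literals are atoms). -/
def plF : Fml → CF
  | Fml.bot => CF.bot
  | Fml.top => CF.top
  | Fml.lit (Lit.pos a) => CF.atom false a
  | Fml.lit (Lit.neg _) => CF.bot
  | Fml.not F => CF.not (plF F)
  | Fml.conj F G => CF.and (plF F) (plF G)
  | Fml.disj F G => CF.or (plF F) (plF G)

def plR (r : Rule) : CF := CF.imp (plF r.body) (plF r.head)

/-- φ' : replace every occurrence of an original atom that is not in the scope of ¬
by its primed counterpart. -/
def primeCF : CF → CF
  | CF.bot => CF.bot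
  | CF.top => CF.top
  | CF.atom _ a => CF.atom true a
  | CF.not φ => CF.not φ
  | CF.and φ ψ => CF.and (primeCF φ) (primeCF ψ)
  | CF.or φ ψ => CF.or (primeCF φ) (primeCF ψ)
  | CF.imp φ ψ => CF.imp (primeCF φ) (primeCF ψ)

/-- The theory pl(P) = { pl(r) : r ∈ P } ∪ { pl(r)' : r ∈ P } ∪ { A' ⊃ A : A ∈ 𝒜 }. -/
def plTh (A : Set ℕ) (P : Prog) : Set CF :=
  {φ | ∃ r ∈ P, φ = plR r} ∪ {φ | ∃ r ∈ P, φ = primeCF (plR r)} ∪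
    {φ | ∃ a ∈ A, φ = CF.imp (CF.atom true a) (CF.atom false a)}

/-- Atoms occurring in a formula. -/
def Fml.atoms : Fml → Set ℕ
  | Fml.bot => ∅
  | Fml.top => ∅
  | Fml.lit (Lit.pos a) => {a}
  | Fml.lit (Lit.neg a) => {a}
  | Fml.not F => F.atoms
  | Fml.conj F G => F.atoms ∪ G.atoms
  | Fml.disj F G => F.atoms ∪ G.atoms

def ProgAtoms (P : Prog) : Set ℕ :=
  {a | ∃ r ∈ P, a ∈ r.head.atoms ∪ r.body.atoms}

/-- `copyLits I true` is the paper's `I_new` and `copyLits I false` its `I_old`. -/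
def copyLits (I : Set (Bool × ℕ)) (b : Bool) : Set Lit := Lit.pos '' {a | (b, a) ∈ I}

def twoCopyInterp (U V : Set ℕ) : Set (Bool × ℕ) := {p | p.2 ∈ cond p.1 U V}

lemma Lit.pos_injective : Function.Injective Lit.pos := fun _ _ h => Lit.pos.inj h

lemma Lit.pos_mem_image_pos {S : Set ℕ} {a : ℕ} : Lit.pos a ∈ Lit.pos '' S ↔ a ∈ S :=
  Lit.pos_injective.mem_set_image

lemma Lit.neg_not_mem_image_pos {S : Set ℕ} {a : ℕ} : Lit.neg a ∉ Lit.pos '' S := by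
  rintro ⟨_, _, h⟩
  cases h

lemma consistent_image_pos (S : Set ℕ) : Consistent (Lit.pos '' S) :=
  fun _ h => Lit.neg_not_mem_image_pos h.2

lemma AtomsOnly.eq_image_pos {Z : Set Lit} (hZ : AtomsOnly Z) :
    Z = Lit.pos '' {a | Lit.pos a ∈ Z} := by
  ext l
  constructor
  · intro hl
    obtain ⟨a, rfl⟩ := hZ l hl
    exact ⟨a, hl, rfl⟩
  · rintro ⟨a, ha, rfl⟩
    exact ha

lemma image_pos_subset_image_pos_iff {S T : Set ℕ} : Lit.pos '' S ⊆ Lit.pos '' T ↔ S ⊆ T :=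
  Set.image_subset_image_iff Lit.pos_injective

section Interpretation

variable (I : Set (Bool × ℕ))

lemma csat_plF (F : Fml) : CSat I (plF F) ↔ Sat (copyLits I false) F := by
  induction F with
  | bot | top => rfl
  | lit l =>
    cases l with
    | pos a => exact (Lit.pos_mem_image_pos (S := {a | (false, a) ∈ I})).symm
    | neg a => exact iff_of_false id Lit.neg_not_mem_image_pos
  | not F ih => exact not_congr ih
  | conj F G ihF ihG => exact and_congr ihF ihG
  | disj F G ihF ihG => exact or_congr ihF ihG

lemma csat_primeCF_plF (F : Fml) :
    CSat I (primeCF (plF F)) ↔ Sat (copyLits I true) (Reduct (copyLits I false) F) := by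
  induction F with
  | bot | top => rfl
  | lit l =>
    cases l with
    | pos a => exact (Lit.pos_mem_image_pos (S := {a | (true, a) ∈ I})).symm
    | neg a => exact iff_of_false id Lit.neg_not_mem_image_pos
  | not F _ =>
    show ¬ CSat I (plF F) ↔ Sat _ (if Sat (copyLits I false) F then Fml.bot else Fml.top)
    rw [csat_plF]
    split_ifs <;> simp only [Sat, *, not_true_eq_false, not_false_eq_true]
  | conj F G ihF ihG => exact and_congr ihF ihG
  | disj F G ihF ihG => exact or_congr ihF ihG

lemma csat_plR (r : Rule) : CSat I (plR r) ↔ SatRule (copyLits I false) r :=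
  imp_congr (csat_plF I r.body) (csat_plF I r.head)

lemma csat_primeCF_plR (r : Rule) :
    CSat I (primeCF (plR r)) ↔ SatRule (copyLits I true) (ReductRule (copyLits I false) r) :=
  imp_congr (csat_primeCF_plF I r.body) (csat_primeCF_plF I r.head)

lemma forall_mem_plTh_iff {A : Set ℕ} {P : Prog} {C : CF → Prop} :
    (∀ φ ∈ plTh A P, C φ) ↔ (∀ r ∈ P, C (plR r)) ∧ (∀ r ∈ P, C (primeCF (plR r))) ∧
      ∀ a ∈ A, C (CF.imp (CF.atom true a) (CF.atom false a)) := by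
  constructor
  · intro h
    exact ⟨fun r hr => h _ (.inl (.inl ⟨r, hr, rfl⟩)), fun r hr => h _ (.inl (.inr ⟨r, hr, rfl⟩)),
      fun a ha => h _ (.inr ⟨a, ha, rfl⟩)⟩
  · rintro ⟨hpl, hprime, hatom⟩ φ ((⟨r, hr, rfl⟩ | ⟨r, hr, rfl⟩) | ⟨a, ha, rfl⟩)
    exacts [hpl r hr, hprime r hr, hatom a ha]

lemma csat_plTh_iff (A : Set ℕ) (P : Prog) :
    (∀ φ ∈ plTh A P, CSat I φ) ↔
      SatProg (copyLits I false) P ∧ SatProg (copyLits I true) (ReductProg (copyLits I false) P) ∧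
        ∀ a ∈ A, (true, a) ∈ I → (false, a) ∈ I := by
  rw [forall_mem_plTh_iff, SatProg, SatProg, ReductProg, Set.forall_mem_image]
  exact and_congr (forall₂_congr fun r _ => csat_plR I r)
    (and_congr (forall₂_congr fun r _ => csat_primeCF_plR I r) Iff.rfl)

lemma copyLits_true_subset_false_iff (A : Set ℕ) (hI : ∀ x ∈ I, x.2 ∈ A) :
    copyLits I true ⊆ copyLits I false ↔ ∀ a ∈ A, (true, a) ∈ I → (false, a) ∈ I := by
  rw [copyLits, copyLits, image_pos_subset_image_pos_iff]
  exact ⟨fun h a _ ha => h ha, fun h a ha => h a (hI _ ha) ha⟩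

theorem csat_plTh_iff_seModel (A : Set ℕ) (P : Prog) (hI : ∀ x ∈ I, x.2 ∈ A) :
    (∀ φ ∈ plTh A P, CSat I φ) ↔ SEModel P (copyLits I true) (copyLits I false) := by
  rw [csat_plTh_iff, ← copyLits_true_subset_false_iff I A hI, SEModel]
  simp only [consistent_image_pos, copyLits, true_and]
  tauto

end Interpretation

theorem exists_interp_of_seModel {A : Set ℕ} {P : Prog} {X Y : Set Lit} (hXY : SEModel P X Y)
    (hX : AtomsOnly X) (hY : AtomsOnly Y) (hYA : ∀ a : ℕ, Lit.pos a ∈ Y → a ∈ A) :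
    ∃ I : Set (Bool × ℕ), (∀ x ∈ I, x.2 ∈ A) ∧ X = copyLits I true ∧ Y = copyLits I false := by
  refine ⟨twoCopyInterp {a | Lit.pos a ∈ X} {a | Lit.pos a ∈ Y}, ?_, hX.eq_image_pos,
    hY.eq_image_pos⟩
  rintro ⟨_ | _, a⟩ ha
  · exact hYA a ha
  · exact hYA a (hXY.2.2.1 ha)

theorem stmt17_general (A : Set ℕ) (P : Prog) :
    (∀ I : Set (Bool × ℕ), (∀ x ∈ I, x.2 ∈ A) →
      ((∀ φ ∈ plTh A P, CSat I φ) ↔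
        SEModel P (Lit.pos '' {a | (true, a) ∈ I}) (Lit.pos '' {a | (false, a) ∈ I}))) ∧
    (∀ X Y : Set Lit, SEModel P X Y → AtomsOnly X → AtomsOnly Y →
      (∀ a : ℕ, Lit.pos a ∈ Y → a ∈ A) →
      ∃ I : Set (Bool × ℕ), (∀ x ∈ I, x.2 ∈ A) ∧
        X = Lit.pos '' {a | (true, a) ∈ I} ∧ Y = Lit.pos '' {a | (false, a) ∈ I}) :=
  ⟨fun I hI => csat_plTh_iff_seModel I A P hI,
    fun _ _ hXY hX hY hYA => exists_interp_of_seModel hXY hX hY hYA⟩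

/-- a classical interpretation I (over the extended language) satisfies
pl(P) iff (I_new, I_old) is an SE-model of P; moreover every positive SE-model of P
arises this way. -/
theorem stmt17 (A : Set ℕ) (P : Prog) (hnf : ProgNegFree P) (hA : ProgAtoms P ⊆ A) :
    (∀ I : Set (Bool × ℕ), (∀ x ∈ I, x.2 ∈ A) →
      ((∀ φ ∈ plTh A P, CSat I φ) ↔
        SEModel P (Lit.pos '' {a | (true, a) ∈ I}) (Lit.pos '' {a | (false, a) ∈ I}))) ∧
    (∀ X Y : Set Lit, SEModel P X Y → AtomsOnly X → AtomsOnly Y →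
      (∀ a : ℕ, Lit.pos a ∈ Y → a ∈ A) →
      ∃ I : Set (Bool × ℕ), (∀ x ∈ I, x.2 ∈ A) ∧
        X = Lit.pos '' {a | (true, a) ∈ I} ∧ Y = Lit.pos '' {a | (false, a) ∈ I}) :=
  stmt17_general A P
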